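/- Under the assumptions 0 < α < π, |β| ≤ α, β > α − π, the function G(γ) = (y₁(γ)+y₂(γ))²/(−sin γ) satisfies G'(γ) = σ(γ)/q(γ)² on the interior of Γ = [α−π, β]∩(−∞,0), where q(γ) = −sin γ/(y₁(γ)+y₂(γ)), σ(γ) = cos γ + (sin γ/(y₁+y₂))·(√(sin(α−γ)) + √(sin(β−γ))), y₁(γ) = (1/2)∫₀^{α−γ}√(sin τ)dτ, and y₂(γ) = (1/2)∫₀^{β−γ}√(sin τ)dτ. -/

import Mathlib

open Real Set

noncomputable def y₁ (α : ℝ) (γ : ℝ) : ℝ := (1/2) * ∫ τ in (0:ℝ)..(α - γ), Real.sqrt (Real.sin τ)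
noncomputable def y₂ (β : ℝ) (γ : ℝ) : ℝ := (1/2) * ∫ τ in (0:ℝ)..(β - γ), Real.sqrt (Real.sin τ)
noncomputable def Gfun (α β : ℝ) (γ : ℝ) : ℝ := (y₁ α γ + y₂ β γ) ^ 2 / (-Real.sin γ)
noncomputable def qfun (α β : ℝ) (γ : ℝ) : ℝ := -Real.sin γ / (y₁ α γ + y₂ β γ)
noncomputable def σfun (α β : ℝ) (γ : ℝ) : ℝ :=
  Real.cos γ + (Real.sin γ / (y₁ α γ + y₂ β γ)) *
    (Real.sqrt (Real.sin (α - γ)) + Real.sqrt (Real.sin (β - γ)))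

/-!
By the fundamental theorem of calculus `y₁' = -√(sin (α - γ)) / 2` and `y₂' = -√(sin (β - γ)) / 2`;
the formula is then the quotient rule for `(y₁ + y₂)² / (-sin γ)`, regrouped through `q`.
-/

lemma hasDerivAt_integral_sub {f : ℝ → ℝ} (hf : Continuous f) (a x : ℝ) :
    HasDerivAt (fun x => ∫ τ in (0:ℝ)..(a - x), f τ) (-f (a - x)) x := by
  have h := (hf.integral_hasStrictDerivAt 0 (a - x)).hasDerivAt.comp x
    ((hasDerivAt_id' x).const_sub a)
  exact h.congr_deriv (by ring)

lemma hasDerivAt_y₁ (α γ : ℝ) : HasDerivAt (y₁ α) (-√(sin (α - γ)) / 2) γ := by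
  have h := (hasDerivAt_integral_sub (continuous_sin.sqrt) α γ).const_mul (1 / 2 : ℝ)
  exact h.congr_deriv (by ring)

lemma hasDerivAt_y₂ (β γ : ℝ) : HasDerivAt (y₂ β) (-√(sin (β - γ)) / 2) γ :=
  hasDerivAt_y₁ β γ

/-- This form of the quotient rule stays valid where `s x = 0`: both sides then vanish, the right
one because the junk value `u x / 0 = 0` is squared in its denominator. -/
lemma HasDerivAt.sq_div {s u : ℝ → ℝ} {s' u' x : ℝ} (hs : HasDerivAt s s' x)
    (hu : HasDerivAt u u' x) (hux : u x ≠ 0) :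
    HasDerivAt (fun x => s x ^ 2 / u x) ((2 * s' * u x / s x - u') / (u x / s x) ^ 2) x := by
  refine ((hs.pow 2).div hu hux).congr_deriv ?_
  rcases eq_or_ne (s x) 0 with h | h
  · simp [h]
  · simp only [Pi.pow_apply]
    field_simp
    norm_num
    ring

theorem G_deriv_eq_general (α β γ : ℝ)
    (hα : 0 < α)
    (hγ1 : α - π < γ) (hγ0 : γ < 0) :
    deriv (Gfun α β) γ = σfun α β γ / (qfun α β γ) ^ 2 := by
  have hsin : sin γ < 0 := sin_neg_of_neg_of_neg_pi_lt hγ0 (by linarith)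
  have hG : HasDerivAt (Gfun α β) _ γ :=
    ((hasDerivAt_y₁ α γ).add (hasDerivAt_y₂ β γ)).sq_div (hasDerivAt_sin γ).neg
      (by linarith : -sin γ ≠ 0)
  rw [hG.deriv, σfun, qfun, Pi.add_apply]
  ring

theorem G_deriv_eq (α β γ : ℝ)
    (hα : 0 < α) (hα' : α < π) (hβ : |β| ≤ α) (hβ' : β > α - π)
    (hγ1 : α - π < γ) (hγ2 : γ < β) (hγ0 : γ < 0) :
    deriv (Gfun α β) γ = σfun α β γ / (qfun α β γ) ^ 2 :=
  G_deriv_eq_general α β γ hα hγ1 hγ0
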